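/- arXiv:1605.06927 — 3 statements merged into one kernel-verified Lean document; each statement's English description precedes it below -/
import Mathlib

section
/- Over the rationals (or any field of characteristic 0), with L = 4 and R_l the 4×4 cyclic rotation matrices, the 3L×3L block matrix [[I,0,0],[I, 2R_1, 3R_3],[I, 4R_2, 9R_1]] has nonzero determinant, i.e. is invertible. -/
/-
With `R = rot4 1` we have `rot4 l = R ^ l` and `R ^ 4 = 1`. A kernel vector `(x, y, z)` satisfies
`x = 0`, `2 R y + 3 R³ z = 0` and `4 R² y + 9 R z = 0`. Applying `2 R` to the first equation and
subtracting it from the second leaves `3 R z = 2 z`, so `z` is an eigenvector of `R` for `2 / 3`;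
since `(2 / 3) ^ 4 ≠ 1` while `R ^ 4 = 1`, `z = 0`, and then `2 R y = 0` gives `y = 0`.
-/

/-- Cyclic rotation matrix over ℚ, size 4. -/
def rot4 (l : ℕ) : Matrix (Fin 4) (Fin 4) ℚ :=
  Matrix.of fun i j => if (j : ℕ) = ((i : ℕ) + l) % 4 then 1 else 0

/-- 3×3 block matrix of 4×4 blocks. -/
def blk3 (B : Fin 3 → Fin 3 → Matrix (Fin 4) (Fin 4) ℚ) :
    Matrix (Fin 3 × Fin 4) (Fin 3 × Fin 4) ℚ :=
  Matrix.of fun p q => B p.1 q.1 p.2 q.2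

open Matrix
open scoped Fin.NatCast

theorem Matrix.eq_zero_of_mulVec_eq_smul_of_pow_eq_one {n K : Type*} [Fintype n] [DecidableEq n]
    [Field K] {A : Matrix n n K} {m : ℕ} (hA : A ^ m = 1) {c : K} (hc : c ^ m ≠ 1) {v : n → K}
    (hv : A *ᵥ v = c • v) : v = 0 := by
  have hpow : ∀ k : ℕ, (A ^ k) *ᵥ v = c ^ k • v := by
    intro k
    induction k with
    | zero => simp
    | succ k ih => rw [pow_succ, ← mulVec_mulVec, hv, mulVec_smul, ih, smul_smul, ← pow_succ']
  have : (c ^ m - 1) • v = 0 := by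
    rw [sub_smul, ← hpow, hA, one_mulVec, one_smul, sub_self]
  exact (smul_eq_zero.mp this).resolve_left (sub_ne_zero.mpr hc)

theorem rot4_apply (l : ℕ) (i j : Fin 4) : rot4 l i j = if j = i + (l : Fin 4) then 1 else 0 := by
  simp only [rot4, of_apply, Fin.ext_iff, Fin.val_add, Fin.val_natCast, Nat.add_mod_mod]

theorem rot4_add (a b : ℕ) : rot4 (a + b) = rot4 a * rot4 b := by
  ext i j
  rw [mul_apply, Finset.sum_eq_single (i + (a : Fin 4))]
  · simp [rot4_apply, add_assoc]
  · intro k _ hk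
    simp [rot4_apply, hk]
  · simp

theorem rot4_zero : rot4 0 = 1 := by
  ext i j
  simp [rot4_apply, one_apply, eq_comm]

theorem rot4_four : rot4 4 = 1 := by
  ext i j
  simp [rot4_apply, one_apply, eq_comm]

theorem rot4_one_pow (l : ℕ) : rot4 1 ^ l = rot4 l := by
  induction l with
  | zero => rw [pow_zero, rot4_zero]
  | succ l ih => rw [pow_succ, ih, rot4_add]

theorem blk3_mulVec_row (B : Fin 3 → Fin 3 → Matrix (Fin 4) (Fin 4) ℚ)
    (v : Fin 3 × Fin 4 → ℚ) (i : Fin 3) :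
    (fun j => (blk3 B *ᵥ v) (i, j)) = ∑ k, B i k *ᵥ fun j => v (k, j) := by
  ext j
  simp [blk3, mulVec, dotProduct, Fintype.sum_prod_type, Finset.sum_apply]

theorem rot4_mulVec_apply (l : ℕ) (v : Fin 4 → ℚ) (i : Fin 4) :
    (rot4 l *ᵥ v) i = v (i + l) := by
  simp [mulVec, dotProduct, rot4_apply]

theorem eq_zero_of_rot4_system {y z : Fin 4 → ℚ}
    (h1 : (2 • rot4 1) *ᵥ y + (3 • rot4 3) *ᵥ z = 0)
    (h2 : (4 • rot4 2) *ᵥ y + (9 • rot4 1) *ᵥ z = 0) : y = 0 ∧ z = 0 := by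
  have hz : ∀ i, 3 * z (i + 1) = 2 * z i := fun i => by
    have e1 := congrFun h1 (i + 1)
    have e2 := congrFun h2 i
    simp only [Pi.add_apply, smul_mulVec, Pi.smul_apply, rot4_mulVec_apply, Pi.zero_apply] at e1 e2
    simp [add_assoc] at e1 e2
    linear_combination (e2 - 2 * e1) / 3
  have hz0 : z = 0 := by
    refine eq_zero_of_mulVec_eq_smul_of_pow_eq_one (rot4_one_pow 4 ▸ rot4_four) (c := 2 / 3)
      (by norm_num) (funext fun i => ?_)
    rw [rot4_mulVec_apply, Pi.smul_apply, smul_eq_mul, Nat.cast_one]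
    linear_combination hz i / 3
  refine ⟨funext fun i => ?_, hz0⟩
  have e1 := congrFun h1 (i - 1)
  simp only [hz0, mulVec_zero, add_zero, smul_mulVec, Pi.smul_apply, rot4_mulVec_apply] at e1
  simpa using e1

theorem eq_zero_of_rotationCode_mulVec_eq_zero {v : Fin 3 × Fin 4 → ℚ}
    (hv : blk3 ![![1, 0, 0], ![1, 2 • rot4 1, 3 • rot4 3], ![1, 4 • rot4 2, 9 • rot4 1]] *ᵥ v = 0) :
    v = 0 := by
  have row (i : Fin 3) : ∑ k, ![![1, 0, 0], ![1, 2 • rot4 1, 3 • rot4 3],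
      ![1, 4 • rot4 2, 9 • rot4 1]] i k *ᵥ (fun j => v (k, j)) = 0 := by
    rw [← blk3_mulVec_row, hv]; rfl
  have hx : (fun j => v (0, j)) = 0 := by simpa [Fin.sum_univ_three] using row 0
  have row₁ := row 1
  have row₂ := row 2
  simp only [Fin.sum_univ_three, hx, mulVec_zero, zero_add, cons_val_zero, cons_val_one,
    cons_val_two, tail_cons, head_cons] at row₁ row₂
  obtain ⟨hy, hz⟩ := eq_zero_of_rot4_system row₁ row₂
  ext ⟨i, j⟩
  fin_cases i
  exacts [congrFun hx j, congrFun hy j, congrFun hz j]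

theorem case3_invertible :
    (blk3 ![![1, 0, 0], ![1, 2 • rot4 1, 3 • rot4 3], ![1, 4 • rot4 2, 9 • rot4 1]]).det ≠ 0 ∧
    IsUnit (blk3 ![![1, 0, 0], ![1, 2 • rot4 1, 3 • rot4 3], ![1, 4 • rot4 2, 9 • rot4 1]]) := by
  have hdet : (blk3 ![![1, 0, 0], ![1, 2 • rot4 1, 3 • rot4 3],
      ![1, 4 • rot4 2, 9 • rot4 1]]).det ≠ 0 := fun h0 => by
    obtain ⟨v, hv0, hv⟩ := exists_mulVec_eq_zero_iff.mpr h0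
    exact hv0 (eq_zero_of_rotationCode_mulVec_eq_zero hv)
  exact ⟨hdet, (isUnit_iff_isUnit_det _).mpr hdet.isUnit⟩
end

section
/- Over the rationals, with L = 4, the 12×12 block matrix [[I, 0, 0],[0, I, 0],[I, 4R_2, 9R_3]] is invertible. -/
lemma rot4_mul_rot4 (l m : ℕ) : rot4 l * rot4 m = rot4 (l + m) := by
  ext i j
  have hk : ((i : ℕ) + l) % 4 < 4 := Nat.mod_lt _ (by norm_num)
  rw [Matrix.mul_apply, Finset.sum_eq_single ⟨_, hk⟩]
  · simp only [rot4, Matrix.of_apply, if_true, one_mul, Nat.mod_add_mod, add_assoc]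
  · intro k _ hk'
    have : (k : ℕ) ≠ ((i : ℕ) + l) % 4 := fun h => hk' (Fin.ext h)
    simp [rot4, this]
  · simp

lemma rot4_four_mul (l : ℕ) : rot4 (4 * l) = 1 := by
  ext i j
  simp [rot4, Matrix.one_apply, Nat.mod_eq_of_lt i.isLt, Fin.ext_iff, eq_comm]

lemma isUnit_rot4 (l : ℕ) : IsUnit (rot4 l) :=
  .of_mul_eq_one (rot4 (3 * l)) (by rw [rot4_mul_rot4, ← rot4_four_mul l]; ring_nf)

lemma isUnit_nsmul_rot4 {n : ℕ} (hn : n ≠ 0) (l : ℕ) : IsUnit (n • rot4 l) := by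
  rw [← Nat.cast_smul_eq_nsmul ℚ, Algebra.smul_def]
  exact ((isUnit_iff_ne_zero.2 (Nat.cast_ne_zero.2 hn)).map _).mul (isUnit_rot4 l)

lemma blk3_mul (A B : Fin 3 → Fin 3 → Matrix (Fin 4) (Fin 4) ℚ) :
    blk3 A * blk3 B = blk3 fun i k => ∑ j, A i j * B j k := by
  ext ⟨p, i⟩ ⟨q, j⟩
  simp only [blk3, Matrix.of_apply, Matrix.mul_apply, Fintype.sum_prod_type, Matrix.sum_apply]

lemma blk3_one : blk3 ![![1, 0, 0], ![0, 1, 0], ![0, 0, 1]] = 1 := by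
  ext ⟨p, i⟩ ⟨q, j⟩
  revert p q
  simp [Fin.forall_fin_succ, blk3, Matrix.one_apply]

lemma isUnit_blk3_of_isUnit {A B C : Matrix (Fin 4) (Fin 4) ℚ} (hC : IsUnit C) :
    IsUnit (blk3 ![![1, 0, 0], ![0, 1, 0], ![A, B, C]]) := by
  obtain ⟨D, hCD⟩ := hC.exists_right_inv
  refine .of_mul_eq_one (blk3 ![![1, 0, 0], ![0, 1, 0], ![-(D * A), -(D * B), D]]) ?_
  rw [blk3_mul, ← blk3_one]
  congr 1
  funext p q
  revert p q
  simp [Fin.forall_fin_succ, Fin.sum_univ_three, ← mul_assoc, hCD]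

theorem case2_invertible :
    IsUnit (blk3 ![![1, 0, 0], ![0, 1, 0], ![1, 4 • rot4 2, 9 • rot4 3]]) :=
  isUnit_blk3_of_isUnit (isUnit_nsmul_rot4 (by norm_num) 3)
end

section
/- For integers n > k ≥ 2, 1 ≤ p ≤ n−k, and L = (n−k)^k, the permutation-code repair bandwidth γ(p) = kL − (L/(n−k))(p−1)(k−1) satisfies γ(p) ≥ L(p+k−1)/p, with equality when p = n−k. -/
/-- Repair bandwidth of the modified permutation-code recovery scheme, as a rational. -/
noncomputable def γ (n k : ℕ) (p : ℕ) : ℚ :=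
  (k : ℚ) * ((n - k : ℕ) : ℚ) ^ k -
    (((n - k : ℕ) : ℚ) ^ k / ((n - k : ℕ) : ℚ)) * ((p : ℚ) - 1) * ((k : ℚ) - 1)

theorem gamma_ge_lower_bound (n k p : ℕ) (hk : 2 ≤ k) (hnk : k < n)
    (hp : 1 ≤ p) (hpm : p ≤ n - k) :
    let L : ℚ := ((n - k : ℕ) : ℚ) ^ k
    γ n k p ≥ L * ((p : ℚ) + (k : ℚ) - 1) / (p : ℚ) ∧
    γ n k (n - k) = L * (((n - k : ℕ) : ℚ) + (k : ℚ) - 1) / ((n - k : ℕ) : ℚ) := by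
  intro L
  have hm0 : 0 < n - k := Nat.sub_pos_of_lt hnk
  set m : ℚ := ((n - k : ℕ) : ℚ) with hmdef
  have hm1 : (1 : ℚ) ≤ m := by rw [hmdef]; exact_mod_cast hm0
  have hmpos : (0 : ℚ) < m := lt_of_lt_of_le one_pos hm1
  have hppos : (0 : ℚ) < (p : ℚ) := by exact_mod_cast hp
  have hpm' : (p : ℚ) ≤ m := by rw [hmdef]; exact_mod_cast hpm
  have hp1 : (1 : ℚ) ≤ (p : ℚ) := by exact_mod_cast hp
  have hk2 : (2 : ℚ) ≤ (k : ℚ) := by exact_mod_cast hk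
  have hkpow : m ^ k = m ^ (k - 1) * m := by
    rw [← pow_succ, Nat.sub_add_cancel (le_trans one_le_two hk)]
  have hdiv : m ^ k / m = m ^ (k - 1) := by
    rw [hkpow, mul_div_assoc, div_self (ne_of_gt hmpos), mul_one]
  have hApos : (0 : ℚ) < m ^ (k - 1) := pow_pos hmpos _
  constructor
  · show γ n k p ≥ L * ((p : ℚ) + (k : ℚ) - 1) / (p : ℚ)
    rw [ge_iff_le, div_le_iff₀ hppos]
    unfold γ L
    rw [← hmdef, hdiv, hkpow]
    nlinarith [mul_nonneg (mul_nonneg (by linarith : (0:ℚ) ≤ (k:ℚ) - 1)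
      (by linarith : (0:ℚ) ≤ (p:ℚ) - 1)) (by linarith : (0:ℚ) ≤ m - (p:ℚ)), hApos, hp1]
  · show γ n k (n - k) = L * (m + (k : ℚ) - 1) / m
    unfold γ L
    rw [← hmdef, hdiv, hkpow]
    field_simp
    ring
end
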